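/- arXiv:1001.2660 — 3 statements merged into one kernel-verified Lean document; each statement's English description precedes it below -/
import Mathlib

section
/- Let a, b, p, x be real numbers with 0 < a < p, 0 < b < p and x > 0, and set q = e^{-x}. Then R(a,b,p;e^{-x}) = exp( -x((a²-b²)/(2p) - (a-b)/2) - ∑_{n=1}^∞ (1/n) · (e^{anx} + e^{(p-a)nx} - e^{(p-b)nx} - e^{bnx}) / (e^{pnx} - 1) ). -/
open Real

/-- The q-Pochhammer infinite product `(a;q)_∞ = ∏_{n=0}^∞ (1 - a qⁿ)`. -/
noncomputable def qPoch (a q : ℝ) : ℝ := ∏' n : ℕ, (1 - a * q ^ n)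

/-- The "Agile" `[a,p;q] = (q^{p-a};q^p)_∞ (q^a;q^p)_∞`. -/
noncomputable def agile (a p q : ℝ) : ℝ :=
  qPoch (q ^ (p - a)) (q ^ p) * qPoch (q ^ a) (q ^ p)

/-- The Ramanujan quantity `R*(a,b,p;q) = [a,p;q]/[b,p;q]`. -/
noncomputable def Rstar (a b p q : ℝ) : ℝ := agile a p q / agile b p q

/-- `R(a,b,p;q) = q^{-(a-b)/2 + (a²-b²)/(2p)} R*(a,b,p;q)`. -/
noncomputable def RQ (a b p q : ℝ) : ℝ :=
  q ^ (-(a - b) / 2 + (a ^ 2 - b ^ 2) / (2 * p)) * Rstar a b p q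

/-!
Taking logarithms, `log (t; s)_∞ = -∑ₙ ∑ₖ (t sⁿ)^(k+1)/(k+1)`. The double series converges
absolutely, so it may be summed over `n` first; the inner sums are geometric, which gives
`log (t; s)_∞ = -∑ₖ t^(k+1) / ((k+1)(1 - s^(k+1)))`. For `t = e^{-(p-c)x}` and `s = e^{-px}` the
`k`-th term is `(1/m) e^{cmx}/(e^{pmx} - 1)` with `m = k+1`, and the two factors of each Agile
contribute the terms for `c = a` and `c = p - a`.
-/

section LogSeries

variable {t s : ℝ}

lemma summable_log_series_prod (ht0 : 0 ≤ t) (ht1 : t < 1) (hs0 : 0 ≤ s) (hs1 : s < 1) :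
    Summable fun nk : ℕ × ℕ => (t * s ^ nk.1) ^ (nk.2 + 1) / (nk.2 + 1 : ℝ) := by
  refine Summable.of_nonneg_of_le (fun _ => by positivity) (fun ⟨n, k⟩ => ?_)
    ((summable_geometric_of_lt_one hs0 hs1).mul_of_nonneg (summable_geometric_of_lt_one ht0 ht1)
      (fun n => pow_nonneg hs0 n) (fun k => pow_nonneg ht0 k))
  calc (t * s ^ n) ^ (k + 1) / (k + 1 : ℝ) ≤ (t * s ^ n) ^ (k + 1) :=
        div_le_self (by positivity) (by linarith [(Nat.cast_nonneg k : (0 : ℝ) ≤ k)])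
    _ = (s ^ n) ^ (k + 1) * (t * t ^ k) := by ring
    _ ≤ s ^ n * t ^ k :=
        mul_le_mul (pow_le_of_le_one (by positivity) (pow_le_one₀ hs0 hs1.le) k.succ_ne_zero)
          (mul_le_of_le_one_left (by positivity) ht1.le) (by positivity) (by positivity)

lemma hasSum_log_series_row (ht0 : 0 ≤ t) (ht1 : t < 1) (hs0 : 0 ≤ s) (hs1 : s < 1) (n : ℕ) :
    HasSum (fun k : ℕ => (t * s ^ n) ^ (k + 1) / (k + 1 : ℝ)) (-log (1 - t * s ^ n)) := by
  apply hasSum_pow_div_log_of_abs_lt_one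
  rw [abs_of_nonneg (by positivity)]
  exact mul_lt_one_of_nonneg_of_lt_one_left ht0 ht1 (pow_le_one₀ hs0 hs1.le)

lemma hasSum_log_series_column (hs0 : 0 ≤ s) (hs1 : s < 1) (k : ℕ) :
    HasSum (fun n : ℕ => (t * s ^ n) ^ (k + 1) / (k + 1 : ℝ))
      (t ^ (k + 1) / ((k + 1 : ℝ) * (1 - s ^ (k + 1)))) := by
  have hgeom := (hasSum_geometric_of_lt_one (pow_nonneg hs0 (k + 1))
    (pow_lt_one₀ hs0 hs1 k.succ_ne_zero)).mul_left (t ^ (k + 1) / (k + 1))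
  have hterm : (fun n : ℕ => (t * s ^ n) ^ (k + 1) / (k + 1 : ℝ)) =
      fun n => t ^ (k + 1) / (k + 1) * (s ^ (k + 1)) ^ n := by
    ext n
    rw [mul_pow, ← pow_mul, mul_comm n, pow_mul]
    ring
  rw [hterm, div_mul_eq_div_div, div_eq_mul_inv _ (1 - s ^ (k + 1))]
  exact hgeom

theorem exists_hasSum_qPoch_eq_exp_neg (ht0 : 0 ≤ t) (ht1 : t < 1) (hs0 : 0 ≤ s) (hs1 : s < 1) :
    ∃ A, HasSum (fun k : ℕ => t ^ (k + 1) / ((k + 1 : ℝ) * (1 - s ^ (k + 1)))) A ∧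
      qPoch t s = exp (-A) := by
  have hf := (summable_log_series_prod ht0 ht1 hs0 hs1).hasSum
  have hrows := hf.prod_fiberwise (hasSum_log_series_row ht0 ht1 hs0 hs1)
  have hcols := ((Equiv.prodComm ℕ ℕ).hasSum_iff.2 hf).prod_fiberwise
    (hasSum_log_series_column hs0 hs1)
  refine ⟨_, hcols, ?_⟩
  have hlog := hrows.neg
  simp only [neg_neg] at hlog
  have hpos (n : ℕ) : 0 < 1 - t * s ^ n := by
    linarith [mul_lt_one_of_nonneg_of_lt_one_left ht0 ht1 (pow_le_one₀ hs0 hs1.le (n := n))]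
  rw [qPoch, ← rexp_tsum_eq_tprod hpos hlog.summable, hlog.tsum_eq]

end LogSeries

section ExpParametrization

variable {c p x : ℝ}

lemma exp_neg_pow_div_one_sub_exp_neg_pow (hp : 0 < p) (hx : 0 < x) (k : ℕ) :
    exp (-x * (p - c)) ^ (k + 1) / ((k + 1 : ℝ) * (1 - exp (-x * p) ^ (k + 1))) =
      1 / (↑(k + 1) : ℝ) * exp (c * ↑(k + 1) * x) / (exp (p * ↑(k + 1) * x) - 1) := by
  have hE : 1 < exp (p * ↑(k + 1) * x) := one_lt_exp_iff.2 (by positivity)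
  have h1 : exp (-x * (p - c)) ^ (k + 1) = exp (c * ↑(k + 1) * x) / exp (p * ↑(k + 1) * x) := by
    rw [← exp_nat_mul, ← exp_sub]
    ring_nf
  have h2 : exp (-x * p) ^ (k + 1) = (exp (p * ↑(k + 1) * x))⁻¹ := by
    rw [← exp_nat_mul, ← exp_neg]
    ring_nf
  rw [h1, h2, ← Nat.cast_succ]
  field_simp

theorem exists_hasSum_qPoch_exp_neg_rpow (hp : 0 < p) (hc : c < p) (hx : 0 < x) :
    ∃ A, HasSum (fun n : ℕ => 1 / (↑(n + 1) : ℝ) * exp (c * ↑(n + 1) * x) /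
        (exp (p * ↑(n + 1) * x) - 1)) A ∧
      qPoch (exp (-x) ^ (p - c)) (exp (-x) ^ p) = exp (-A) := by
  have hlt {d : ℝ} (hd : 0 < d) : exp (-x * d) < 1 := exp_lt_one_iff.2 (by nlinarith)
  obtain ⟨A, hA, hq⟩ := exists_hasSum_qPoch_eq_exp_neg (exp_pos _).le (hlt (sub_pos.2 hc))
    (exp_pos _).le (hlt hp)
  refine ⟨A, ?_, by rw [← exp_mul, ← exp_mul, hq]⟩
  simpa only [exp_neg_pow_div_one_sub_exp_neg_pow hp hx] using hA

end ExpParametrization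

theorem exists_hasSum_agile_exp_neg {a p x : ℝ} (ha : 0 < a) (hap : a < p) (hx : 0 < x) :
    ∃ A, HasSum (fun n : ℕ => 1 / (↑(n + 1) : ℝ) *
        (exp (a * ↑(n + 1) * x) + exp ((p - a) * ↑(n + 1) * x)) /
        (exp (p * ↑(n + 1) * x) - 1)) A ∧
      agile a p (exp (-x)) = exp (-A) := by
  have hp := ha.trans hap
  obtain ⟨A, hA, hqA⟩ := exists_hasSum_qPoch_exp_neg_rpow hp hap hx
  obtain ⟨B, hB, hqB⟩ := exists_hasSum_qPoch_exp_neg_rpow (c := p - a) hp (by linarith) hx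
  rw [sub_sub_cancel] at hqB
  refine ⟨A + B, ?_, by rw [agile, hqA, hqB, ← exp_add, neg_add]⟩
  refine (hA.add hB).congr_fun fun n => ?_
  ring

/-- Theorem 3, second equality: for `0 < a < p`, `0 < b < p` and `x > 0`,
`R(a,b,p;e^{-x}) = exp(-x((a²-b²)/(2p) - (a-b)/2)
  - ∑_{n=1}^∞ (1/n)(e^{anx} + e^{(p-a)nx} - e^{(p-b)nx} - e^{bnx})/(e^{pnx}-1))`. -/
theorem ramanujan_quantity_exp_series (a b p x : ℝ)
    (ha0 : 0 < a) (hap : a < p) (hb0 : 0 < b) (hbp : b < p) (hx : 0 < x) :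
    RQ a b p (Real.exp (-x)) =
      Real.exp (-x * ((a ^ 2 - b ^ 2) / (2 * p) - (a - b) / 2) -
        ∑' n : ℕ, (1 / (↑(n + 1) : ℝ)) *
          (Real.exp (a * (↑(n + 1) : ℝ) * x) +
            Real.exp ((p - a) * (↑(n + 1) : ℝ) * x) -
            Real.exp ((p - b) * (↑(n + 1) : ℝ) * x) -
            Real.exp (b * (↑(n + 1) : ℝ) * x)) /
          (Real.exp (p * (↑(n + 1) : ℝ) * x) - 1)) := by
  obtain ⟨A, hA, hagA⟩ := exists_hasSum_agile_exp_neg ha0 hap hx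
  obtain ⟨B, hB, hagB⟩ := exists_hasSum_agile_exp_neg hb0 hbp hx
  have hsum : HasSum (fun n : ℕ => (1 / (↑(n + 1) : ℝ)) *
      (exp (a * (↑(n + 1) : ℝ) * x) + exp ((p - a) * (↑(n + 1) : ℝ) * x) -
        exp ((p - b) * (↑(n + 1) : ℝ) * x) - exp (b * (↑(n + 1) : ℝ) * x)) /
      (exp (p * (↑(n + 1) : ℝ) * x) - 1)) (A - B) := by
    refine (hA.sub hB).congr_fun fun n => ?_
    ring
  rw [RQ, Rstar, hagA, hagB, hsum.tsum_eq, ← exp_sub, ← exp_mul, ← exp_add]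
  ring_nf
end

section
/- Let 0 < q < 1, p > 0 and 0 < a < p be real numbers, and let M(c,Q) = ∑_{n=0}^∞ c^n Q^{n(n+1)/2}. Then M(-q^{-a}, q^p) - q^a · M(-q^a, q^p) = f(-q^p) · [a,p;q]. -/
/-!
Put `Q = q^p` and `w = q^a`. The two series are the halves `j ≥ 0` and `j < 0` of the Jacobi
triple product
  `∑_{j ∈ ℤ} (-w⁻¹)^j Q^{j(j+1)/2} = (Q;Q)_∞ (w;Q)_∞ (Q/w;Q)_∞`,
valid for every `w ≠ 0`. Its finite version
  `(w;Q)_N (Q/w;Q)_N = ∑_{|j| ≤ N} [2N, N+j]_Q (-w⁻¹)^j Q^{j(j+1)/2}`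
is the q-binomial theorem with the first `N` factors reflected. As `N → ∞` the Gaussian binomial
coefficients stay below `1/(Q;Q)_∞` and tend to it, so dominated convergence gives the product.
-/

open Real

/-- `M(c,Q) = ∑_{n=0}^∞ cⁿ Q^{n(n+1)/2}`. -/
noncomputable def Mfun (c Q : ℝ) : ℝ := ∑' n : ℕ, c ^ n * Q ^ (n * (n + 1) / 2)

open Filter Finset Topology

noncomputable def qPochFin (a q : ℝ) (n : ℕ) : ℝ := ∏ i ∈ range n, (1 - a * q ^ i)

section qPochhammer

variable {a q : ℝ}

lemma qPochFin_zero : qPochFin a q 0 = 1 := prod_range_zero _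

lemma qPochFin_succ (a q : ℝ) (n : ℕ) :
    qPochFin a q (n + 1) = qPochFin a q n * (1 - a * q ^ n) :=
  prod_range_succ _ _

lemma multipliable_one_sub_mul_pow (a : ℝ) (hq : |q| < 1) :
    Multipliable fun n : ℕ ↦ 1 - a * q ^ n := by
  simp_rw [sub_eq_add_neg]
  apply multipliable_one_add_of_summable
  simpa [abs_mul, abs_pow] using (summable_geometric_of_lt_one (abs_nonneg q) hq).mul_left |a|

lemma tendsto_qPochFin (a : ℝ) (hq : |q| < 1) :
    Tendsto (qPochFin a q) atTop (𝓝 (qPoch a q)) :=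
  (multipliable_one_sub_mul_pow a hq).hasProd.tendsto_prod_nat

lemma one_sub_mul_pow_pos (ha0 : 0 ≤ a) (ha1 : a < 1) (hq0 : 0 ≤ q) (hq1 : q ≤ 1) (n : ℕ) :
    0 < 1 - a * q ^ n := by
  nlinarith [mul_le_of_le_one_right ha0 (pow_le_one₀ hq0 hq1 (n := n))]

lemma qPoch_pos (ha0 : 0 ≤ a) (ha1 : a < 1) (hq0 : 0 ≤ q) (hq1 : q < 1) : 0 < qPoch a q := by
  have hpos := one_sub_mul_pow_pos ha0 ha1 hq0 hq1.le
  have hlog : Summable fun n : ℕ ↦ Real.log (1 - a * q ^ n) := by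
    simp_rw [sub_eq_add_neg]
    apply Real.summable_log_one_add_of_summable
    exact ((summable_geometric_of_lt_one hq0 hq1).mul_left a).neg
  rw [qPoch, ← Real.rexp_tsum_eq_tprod hpos hlog]
  exact Real.exp_pos _

lemma qPochFin_pos (ha0 : 0 ≤ a) (ha1 : a < 1) (hq0 : 0 ≤ q) (hq1 : q ≤ 1) (n : ℕ) :
    0 < qPochFin a q n :=
  prod_pos fun i _ ↦ one_sub_mul_pow_pos ha0 ha1 hq0 hq1 i

lemma qPochFin_antitone (ha0 : 0 ≤ a) (ha1 : a < 1) (hq0 : 0 ≤ q) (hq1 : q ≤ 1) :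
    Antitone (qPochFin a q) := by
  refine antitone_nat_of_succ_le fun n ↦ ?_
  rw [qPochFin_succ]
  have := qPochFin_pos ha0 ha1 hq0 hq1 n
  nlinarith [mul_nonneg ha0 (pow_nonneg hq0 n)]

lemma qPoch_le_qPochFin (ha0 : 0 ≤ a) (ha1 : a < 1) (hq0 : 0 ≤ q) (hq1 : q < 1) (n : ℕ) :
    qPoch a q ≤ qPochFin a q n :=
  (qPochFin_antitone ha0 ha1 hq0 hq1.le).le_of_tendsto
    (tendsto_qPochFin a (abs_lt.2 ⟨by linarith, hq1⟩)) n

end qPochhammer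

/-- The Gaussian binomial coefficient `[N, k]_Q`, defined by the q-Pascal rule so that no division
occurs; the usual quotient formula is `qBinomial_add_mul_qPochFin`. -/
noncomputable def qBinomial (Q : ℝ) : ℕ → ℕ → ℝ
  | _, 0 => 1
  | 0, _ + 1 => 0
  | N + 1, k + 1 => Q ^ (k + 1) * qBinomial Q N (k + 1) + qBinomial Q N k

section qBinomial

variable {Q : ℝ}

@[simp] lemma qBinomial_zero_right (N : ℕ) : qBinomial Q N 0 = 1 := by
  cases N <;> rfl

@[simp] lemma qBinomial_zero_succ (k : ℕ) : qBinomial Q 0 (k + 1) = 0 := rfl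

lemma qBinomial_succ_succ (N k : ℕ) :
    qBinomial Q (N + 1) (k + 1) = Q ^ (k + 1) * qBinomial Q N (k + 1) + qBinomial Q N k := rfl

lemma qBinomial_eq_zero_of_lt {N k : ℕ} (h : N < k) : qBinomial Q N k = 0 := by
  induction N generalizing k with
  | zero => obtain ⟨k, rfl⟩ := Nat.exists_eq_succ_of_ne_zero h.ne'; rfl
  | succ N ih =>
    obtain ⟨k, rfl⟩ := Nat.exists_eq_succ_of_ne_zero (Nat.ne_zero_of_lt h)
    rw [qBinomial_succ_succ, ih (by omega), ih (by omega), mul_zero, add_zero]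

@[simp] lemma qBinomial_self (N : ℕ) : qBinomial Q N N = 1 := by
  induction N with
  | zero => rfl
  | succ N ih => rw [qBinomial_succ_succ, ih, qBinomial_eq_zero_of_lt (Nat.lt_succ_self N)]; ring

lemma qBinomial_nonneg (hQ : 0 ≤ Q) (N k : ℕ) : 0 ≤ qBinomial Q N k := by
  induction N generalizing k with
  | zero => cases k <;> simp
  | succ N ih =>
    cases k with
    | zero => simp
    | succ k => rw [qBinomial_succ_succ]; have := ih k; have := ih (k + 1); positivity

lemma qBinomial_add_mul_qPochFin (m n : ℕ) :
    qBinomial Q (m + n) m * qPochFin Q Q m * qPochFin Q Q n = qPochFin Q Q (m + n) := by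
  induction m generalizing n with
  | zero => simp [qPochFin_zero]
  | succ k ihk =>
    induction n with
    | zero => simp [qPochFin_zero]
    | succ l ihl =>
      have h1 := ihk (l + 1)
      rw [show k + (l + 1) = k + 1 + l by ring] at h1
      have e1 : Q ^ (k + 1) * qBinomial Q (k + 1 + l) (k + 1) * qPochFin Q Q (k + 1) *
          qPochFin Q Q (l + 1) = Q ^ (k + 1) * (1 - Q * Q ^ l) * qPochFin Q Q (k + 1 + l) := by
        rw [← ihl, qPochFin_succ Q Q l]; ring
      have e2 : qBinomial Q (k + 1 + l) k * qPochFin Q Q (k + 1) * qPochFin Q Q (l + 1) =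
          (1 - Q * Q ^ k) * qPochFin Q Q (k + 1 + l) := by
        rw [← h1, qPochFin_succ Q Q k]; ring
      rw [show k + 1 + (l + 1) = k + 1 + l + 1 by ring, qBinomial_succ_succ,
        qPochFin_succ Q Q (k + 1 + l)]
      linear_combination e1 + e2

lemma qBinomial_le_inv_qPoch (hQ0 : 0 ≤ Q) (hQ1 : Q < 1) (N k : ℕ) :
    qBinomial Q N k ≤ (qPoch Q Q)⁻¹ := by
  have hP := qPoch_pos hQ0 hQ1 hQ0 hQ1
  rcases lt_or_ge N k with h | h
  · rw [qBinomial_eq_zero_of_lt h]; positivity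
  obtain ⟨n, rfl⟩ := Nat.exists_eq_add_of_le h
  have hk := qPochFin_pos hQ0 hQ1 hQ0 hQ1.le k
  have hn := qPochFin_pos hQ0 hQ1 hQ0 hQ1.le n
  have hmul : qBinomial Q (k + n) k * qPochFin Q Q k ≤ 1 := by
    rw [← mul_le_mul_iff_left₀ hn, one_mul, qBinomial_add_mul_qPochFin]
    exact qPochFin_antitone hQ0 hQ1 hQ0 hQ1.le (Nat.le_add_left n k)
  calc qBinomial Q (k + n) k ≤ (qPochFin Q Q k)⁻¹ := by rwa [← one_div, le_div_iff₀ hk]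
    _ ≤ (qPoch Q Q)⁻¹ := inv_anti₀ hP (qPoch_le_qPochFin hQ0 hQ1 hQ0 hQ1 k)

lemma tendsto_qBinomial_add (hQ0 : 0 ≤ Q) (hQ1 : Q < 1) :
    Tendsto (fun mn : ℕ × ℕ ↦ qBinomial Q (mn.1 + mn.2) mn.1) atTop (𝓝 (qPoch Q Q)⁻¹) := by
  have hP := qPoch_pos hQ0 hQ1 hQ0 hQ1
  have hlim := tendsto_qPochFin Q (abs_lt.2 ⟨by linarith, hQ1⟩)
  rw [← prod_atTop_atTop_eq]
  have hfst : Tendsto (fun mn : ℕ × ℕ ↦ mn.1) (atTop ×ˢ atTop) atTop := tendsto_fst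
  have hsnd : Tendsto (fun mn : ℕ × ℕ ↦ mn.2) (atTop ×ˢ atTop) atTop := tendsto_snd
  have hadd : Tendsto (fun mn : ℕ × ℕ ↦ mn.1 + mn.2) (atTop ×ˢ atTop) atTop :=
    tendsto_atTop_mono (fun mn ↦ Nat.le_add_right _ _) hfst
  have hquot := (hlim.comp hadd).div ((hlim.comp hfst).mul (hlim.comp hsnd)) (by positivity)
  rw [show qPoch Q Q / (qPoch Q Q * qPoch Q Q) = (qPoch Q Q)⁻¹ by field_simp] at hquot
  refine hquot.congr fun mn ↦ ?_
  have hm := qPochFin_pos hQ0 hQ1 hQ0 hQ1.le mn.1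
  have hn := qPochFin_pos hQ0 hQ1 hQ0 hQ1.le mn.2
  simp only [Pi.div_apply, Function.comp]
  rw [div_eq_iff (mul_pos hm hn).ne', ← qBinomial_add_mul_qPochFin]
  ring

lemma triangle_succ_eq (k : ℕ) : (k + 1) * (k + 1 + 1) / 2 = k * (k + 1) / 2 + (k + 1) := by
  rw [show (k + 1) * (k + 1 + 1) = k * (k + 1) + 2 * (k + 1) by ring,
    Nat.add_mul_div_left _ _ two_pos]

theorem prod_one_add_mul_pow_succ_eq_sum_qBinomial (Q z : ℝ) (N : ℕ) :
    ∏ j ∈ range N, (1 + z * Q ^ (j + 1)) =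
      ∑ k ∈ range (N + 1), qBinomial Q N k * Q ^ (k * (k + 1) / 2) * z ^ k := by
  induction N generalizing z with
  | zero => simp
  | succ N ih =>
    -- peel off the factor `j = 0` and use the induction hypothesis at `z * Q`
    set C : ℕ → ℝ := fun k ↦ qBinomial Q N k * Q ^ (k * (k + 1) / 2) * (z * Q) ^ k
    have hC : ∑ k ∈ range (N + 1), C (k + 1) + 1 = ∑ k ∈ range (N + 1), C k := by
      have h0 : C 0 = 1 := by simp [C]
      have hlast : C (N + 1) = 0 := by simp [C, qBinomial_eq_zero_of_lt (Nat.lt_succ_self N)]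
      rw [← h0, ← sum_range_succ' C (N + 1), sum_range_succ, hlast, add_zero]
    calc ∏ j ∈ range (N + 1), (1 + z * Q ^ (j + 1))
        = (∏ j ∈ range N, (1 + z * Q * Q ^ (j + 1))) * (1 + z * Q) := by
          rw [prod_range_succ']
          congr 1
          · exact prod_congr rfl fun j _ ↦ by ring
          · ring
      _ = (∑ k ∈ range (N + 1), C (k + 1) + 1) + (∑ k ∈ range (N + 1), C k) * (z * Q) := by
          rw [ih, hC]; ring
      _ = ∑ k ∈ range (N + 1), (C (k + 1) + C k * (z * Q)) + 1 := by
          rw [sum_add_distrib, sum_mul]; ring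
      _ = _ := by
          rw [sum_range_succ' _ (N + 1)]
          refine congr_arg₂ _ (sum_congr rfl fun k _ ↦ ?_) (by simp)
          simp only [C, qBinomial_succ_succ, triangle_succ_eq, pow_add]
          ring

end qBinomial

/-- `j * (j + 1)` is even, so the integer division in the exponent is exact. -/
noncomputable def jacobiTerm (Q w : ℝ) (j : ℤ) : ℝ := (-w⁻¹) ^ j * Q ^ (j * (j + 1) / 2)

lemma add_mul_add_add_one_ediv_two (j k : ℤ) :
    (j + k) * (j + k + 1) / 2 = j * (j + 1) / 2 + k * (k + 1) / 2 + j * k := by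
  obtain ⟨a, ha⟩ := Int.even_mul_succ_self j
  obtain ⟨b, hb⟩ := Int.even_mul_succ_self k
  rw [show (j + k) * (j + k + 1) = 2 * (a + b + j * k) by linear_combination ha + hb, ha, hb]
  omega

section jacobiTerm

variable {Q w : ℝ}

lemma jacobiTerm_add (hQ : Q ≠ 0) (hw : w ≠ 0) (j k : ℤ) :
    jacobiTerm Q w (j + k) = jacobiTerm Q w j * jacobiTerm Q w k * Q ^ (j * k) := by
  have hw' : -w⁻¹ ≠ 0 := by simpa using hw
  simp only [jacobiTerm, add_mul_add_add_one_ediv_two, zpow_add₀ hQ, zpow_add₀ hw']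
  ring

lemma jacobiTerm_natCast (n : ℕ) :
    jacobiTerm Q w n = (-w⁻¹) ^ n * Q ^ (n * (n + 1) / 2) := by
  rw [jacobiTerm, zpow_natCast, ← zpow_natCast Q]
  push_cast [Int.natCast_div]
  rfl

lemma jacobiTerm_neg_add_one (n : ℕ) :
    jacobiTerm Q w (-(n + 1)) = -w * ((-w) ^ n * Q ^ (n * (n + 1) / 2)) := by
  rw [jacobiTerm, show -((n : ℤ) + 1) * (-(n + 1) + 1) = n * (n + 1) by ring, zpow_neg,
    show (n : ℤ) + 1 = ((n + 1 : ℕ) : ℤ) by push_cast; ring, zpow_natCast, ← inv_pow, neg_inv,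
    inv_inv, ← zpow_natCast Q]
  push_cast [Int.natCast_div]
  ring

lemma jacobiTerm_one : jacobiTerm Q w 1 = -w⁻¹ * Q := by simp [jacobiTerm]

lemma jacobiTerm_neg_one : jacobiTerm Q w (-1) = -w := by simp [jacobiTerm]

lemma jacobiTerm_ne_zero (hQ : Q ≠ 0) (hw : w ≠ 0) (j : ℤ) : jacobiTerm Q w j ≠ 0 := by
  have : -w⁻¹ ≠ 0 := by simpa using hw
  unfold jacobiTerm; positivity

lemma summable_norm_jacobiTerm (hQ : Q ≠ 0) (hQ1 : |Q| < 1) (hw : w ≠ 0) :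
    Summable fun j ↦ ‖jacobiTerm Q w j‖ := by
  have hT := jacobiTerm_ne_zero hQ hw
  have hratio (c : ℝ) (u : ℕ → ℤ)
      (hu : ∀ n, jacobiTerm Q w (u (n + 1)) = jacobiTerm Q w (u n) * c * Q ^ n) :
      Summable fun n ↦ ‖jacobiTerm Q w (u n)‖ := by
    refine summable_of_ratio_test_tendsto_lt_one zero_lt_one
      (.of_forall fun n ↦ by simpa using hT _) ?_
    have hlim : Tendsto (fun n : ℕ ↦ ‖c‖ * |Q| ^ n) atTop (𝓝 0) := by
      simpa using (tendsto_pow_atTop_nhds_zero_of_lt_one (abs_nonneg Q) hQ1).const_mul ‖c‖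
    refine hlim.congr fun n ↦ ?_
    rw [hu, norm_norm, norm_norm, norm_mul, norm_mul, norm_pow, Real.norm_eq_abs Q, mul_assoc,
      mul_div_cancel_left₀ _ (norm_ne_zero_iff.2 (hT _))]
  refine Summable.of_nat_of_neg_add_one (hratio (-w⁻¹ * Q) (fun n ↦ n) fun n ↦ ?_)
    (hratio (-w * Q) (fun n ↦ -(n + 1)) fun n ↦ ?_)
  · rw [Nat.cast_succ, jacobiTerm_add hQ hw, jacobiTerm_one, mul_one, zpow_natCast]
  · rw [show -(((n + 1 : ℕ) : ℤ) + 1) = -(n + 1) + -1 by push_cast; ring, jacobiTerm_add hQ hw,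
      jacobiTerm_neg_one, show -((n : ℤ) + 1) * -1 = n + 1 by ring]
    rw [zpow_add_one₀ hQ, zpow_natCast]
    ring

end jacobiTerm

section finiteJacobiTripleProduct

variable {Q w : ℝ}

lemma qPochFin_inv_inv (hQ : Q ≠ 0) (hw : w ≠ 0) (N : ℕ) :
    qPochFin w⁻¹ Q⁻¹ N = Q ^ (-(N * N : ℤ)) * jacobiTerm Q w N * qPochFin w Q N := by
  induction N with
  | zero => simp [qPochFin_zero, jacobiTerm]
  | succ N ih =>
    rw [qPochFin_succ, ih, qPochFin_succ, Nat.cast_succ, jacobiTerm_add hQ hw, jacobiTerm_one,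
      show -(((N : ℤ) + 1) * (N + 1)) = -(N * N) + -(2 * N + 1) by ring, zpow_add₀ hQ,
      show (N : ℤ) * 1 = N by ring, zpow_neg Q (2 * N + 1), inv_pow,
      show (2 * N + 1 : ℤ) = ((2 * N + 1 : ℕ) : ℤ) by push_cast; ring, zpow_natCast, zpow_natCast,
      pow_succ, pow_mul]
    field_simp
    ring

lemma prod_range_two_mul_one_add_eq_qPochFin_mul (hQ : Q ≠ 0) (hw : w ≠ 0) (N : ℕ) :
    ∏ j ∈ range (2 * N), (1 + -w⁻¹ * Q ^ (-(N : ℤ)) * Q ^ (j + 1)) =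
      qPochFin w⁻¹ Q⁻¹ N * qPochFin (Q / w) Q N := by
  have hQN : Q ^ (-(N : ℤ)) * Q ^ N = 1 := by
    rw [zpow_neg, zpow_natCast, inv_mul_cancel₀ (pow_ne_zero _ hQ)]
  rw [two_mul, prod_range_add, ← prod_range_reflect]
  congr 1 <;> refine prod_congr rfl fun i hi ↦ ?_
  · have hpow : Q ^ (N - 1 - i + 1) * Q ^ i = Q ^ N := by
      rw [← pow_add]; congr 1; have := mem_range.1 hi; omega
    rw [inv_pow]
    field_simp
    linear_combination (-Q ^ (-(N : ℤ))) * hpow - hQN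
  · rw [show N + i + 1 = N + (i + 1) by ring, pow_add]
    linear_combination (-w⁻¹) * Q ^ (i + 1) * hQN

lemma jacobiTerm_natCast_sub_natCast (hQ : Q ≠ 0) (hw : w ≠ 0) (k N : ℕ) :
    Q ^ (-(N * N : ℤ)) * jacobiTerm Q w N * jacobiTerm Q w (k - N) =
      Q ^ (k * (k + 1) / 2) * (-w⁻¹ * Q ^ (-(N : ℤ))) ^ k := by
  have hk := jacobiTerm_add hQ hw N (k - N)
  rw [add_sub_cancel, jacobiTerm_natCast] at hk
  have hexp : Q ^ (N * (k - N) : ℤ) * (Q ^ (-(N : ℤ))) ^ k = Q ^ (-(N * N : ℤ)) := by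
    rw [← zpow_natCast (Q ^ _), ← zpow_mul, ← zpow_add₀ hQ]
    ring_nf
  rw [mul_pow]
  linear_combination (-(Q ^ (-(N : ℤ))) ^ k) * hk -
    jacobiTerm Q w N * jacobiTerm Q w (k - N) * hexp

theorem qPochFin_mul_qPochFin_div_eq_sum (hQ : Q ≠ 0) (hw : w ≠ 0) (N : ℕ) :
    qPochFin w Q N * qPochFin (Q / w) Q N =
      ∑ j ∈ Icc (-(N : ℤ)) N, qBinomial Q (2 * N) (j + N).toNat * jacobiTerm Q w j := by
  have hC : Q ^ (-(N * N : ℤ)) * jacobiTerm Q w N ≠ 0 :=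
    mul_ne_zero (zpow_ne_zero _ hQ) (jacobiTerm_ne_zero hQ hw N)
  -- the q-binomial theorem at `z = -w⁻¹ Q^{-N}`, after multiplying by `hC`
  rw [← mul_right_inj' hC, mul_sum, ← mul_assoc, ← qPochFin_inv_inv hQ hw,
    ← prod_range_two_mul_one_add_eq_qPochFin_mul hQ hw,
    prod_one_add_mul_pow_succ_eq_sum_qBinomial]
  refine sum_nbij' (fun k ↦ (k : ℤ) - N) (fun j ↦ (j + N).toNat) ?_ ?_ ?_ ?_ ?_
  · intro k hk; simp only [mem_range] at hk; simp only [mem_Icc]; omega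
  · intro j hj; simp only [mem_Icc] at hj; simp only [mem_range]; omega
  · intro k _; simp
  · intro j hj; simp only [mem_Icc] at hj; omega
  · intro k _
    rw [sub_add_cancel, Int.toNat_natCast, mul_assoc _ (Q ^ _),
      ← jacobiTerm_natCast_sub_natCast hQ hw]
    ring

end finiteJacobiTripleProduct

noncomputable def finiteJacobiCoeff (Q : ℝ) (N : ℕ) (j : ℤ) : ℝ :=
  if j ∈ Icc (-(N : ℤ)) N then qBinomial Q (2 * N) (j + N).toNat else 0

section jacobiTripleProduct

variable {Q w : ℝ}

lemma hasSum_finiteJacobiCoeff_mul_jacobiTerm (hQ : Q ≠ 0) (hw : w ≠ 0) (N : ℕ) :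
    HasSum (fun j ↦ finiteJacobiCoeff Q N j * jacobiTerm Q w j)
      (qPochFin w Q N * qPochFin (Q / w) Q N) := by
  have hIcc : ∑ j ∈ Icc (-(N : ℤ)) N, qBinomial Q (2 * N) (j + N).toNat * jacobiTerm Q w j =
      ∑ j ∈ Icc (-(N : ℤ)) N, finiteJacobiCoeff Q N j * jacobiTerm Q w j :=
    sum_congr rfl fun j hj ↦ by rw [finiteJacobiCoeff, if_pos hj]
  rw [qPochFin_mul_qPochFin_div_eq_sum hQ hw, hIcc]
  exact hasSum_sum_of_ne_finset_zero fun j hj ↦ by rw [finiteJacobiCoeff, if_neg hj, zero_mul]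

lemma finiteJacobiCoeff_nonneg (hQ0 : 0 ≤ Q) (N : ℕ) (j : ℤ) : 0 ≤ finiteJacobiCoeff Q N j := by
  unfold finiteJacobiCoeff
  split_ifs
  exacts [qBinomial_nonneg hQ0 _ _, le_rfl]

lemma finiteJacobiCoeff_le (hQ0 : 0 ≤ Q) (hQ1 : Q < 1) (N : ℕ) (j : ℤ) :
    finiteJacobiCoeff Q N j ≤ (qPoch Q Q)⁻¹ := by
  unfold finiteJacobiCoeff
  split_ifs
  exacts [qBinomial_le_inv_qPoch hQ0 hQ1 _ _, inv_nonneg.2 (qPoch_pos hQ0 hQ1 hQ0 hQ1).le]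

lemma tendsto_finiteJacobiCoeff (hQ0 : 0 ≤ Q) (hQ1 : Q < 1) (j : ℤ) :
    Tendsto (fun N ↦ finiteJacobiCoeff Q N j) atTop (𝓝 (qPoch Q Q)⁻¹) := by
  have hpair : Tendsto (fun N : ℕ ↦ ((j + N).toNat, (N - j).toNat)) atTop atTop := by
    rw [← prod_atTop_atTop_eq]
    exact (tendsto_atTop_atTop.2 fun b ↦ ⟨b + j.natAbs, fun N hN ↦ by omega⟩).prodMk
      (tendsto_atTop_atTop.2 fun b ↦ ⟨b + j.natAbs, fun N hN ↦ by omega⟩)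
  refine ((tendsto_qBinomial_add hQ0 hQ1).comp hpair).congr' ?_
  filter_upwards [eventually_ge_atTop j.natAbs] with N hN
  rw [finiteJacobiCoeff, if_pos (mem_Icc.2 (by omega)), Function.comp_apply,
    show (j + N).toNat + (N - j).toNat = 2 * N by omega]

theorem hasSum_jacobiTerm (hQ0 : 0 < Q) (hQ1 : Q < 1) (hw : w ≠ 0) :
    HasSum (jacobiTerm Q w) (qPoch Q Q * (qPoch w Q * qPoch (Q / w) Q)) := by
  have hQ : |Q| < 1 := abs_lt.2 ⟨by linarith, hQ1⟩
  have hP := qPoch_pos hQ0.le hQ1 hQ0.le hQ1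
  have hsum := summable_norm_jacobiTerm hQ0.ne' hQ hw
  have hprod : Tendsto (fun N ↦ qPochFin w Q N * qPochFin (Q / w) Q N) atTop
      (𝓝 (qPoch w Q * qPoch (Q / w) Q)) :=
    (tendsto_qPochFin w hQ).mul (tendsto_qPochFin _ hQ)
  have hdom : Tendsto (fun N ↦ ∑' j, finiteJacobiCoeff Q N j * jacobiTerm Q w j) atTop
      (𝓝 (∑' j, (qPoch Q Q)⁻¹ * jacobiTerm Q w j)) := by
    refine tendsto_tsum_of_dominated_convergence (hsum.mul_left (qPoch Q Q)⁻¹)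
      (fun j ↦ (tendsto_finiteJacobiCoeff hQ0.le hQ1 j).mul_const _) (.of_forall fun N j ↦ ?_)
    rw [norm_mul, Real.norm_of_nonneg (finiteJacobiCoeff_nonneg hQ0.le N j)]
    exact mul_le_mul_of_nonneg_right (finiteJacobiCoeff_le hQ0.le hQ1 N j) (norm_nonneg _)
  simp_rw [(hasSum_finiteJacobiCoeff_mul_jacobiTerm hQ0.ne' hw _).tsum_eq, tsum_mul_left] at hdom
  rw [tendsto_nhds_unique hprod hdom, ← mul_assoc, mul_inv_cancel₀ hP.ne', one_mul]
  exact hsum.of_norm.hasSum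

end jacobiTripleProduct

theorem Mfun_sub_mul_Mfun {Q w : ℝ} (hQ0 : 0 < Q) (hQ1 : Q < 1) (hw : w ≠ 0) :
    Mfun (-w⁻¹) Q - w * Mfun (-w) Q = qPoch Q Q * (qPoch w Q * qPoch (Q / w) Q) := by
  have hT := hasSum_jacobiTerm hQ0 hQ1 hw
  have hneg : Function.Injective fun n : ℕ ↦ -((n : ℤ) + 1) := fun m n h ↦ by simpa using h
  rw [← hT.tsum_eq, tsum_of_nat_of_neg_add_one (hT.summable.comp_injective Nat.cast_injective)
    (hT.summable.comp_injective hneg)]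
  simp only [jacobiTerm_natCast, jacobiTerm_neg_add_one, tsum_mul_left, Mfun]
  ring

theorem Mfun_agile_general (a p q : ℝ)
    (hq0 : 0 < q) (hq1 : q < 1) (hp : 0 < p) :
    Mfun (-q ^ (-a)) (q ^ p) - q ^ a * Mfun (-q ^ a) (q ^ p) =
      qPoch (q ^ p) (q ^ p) * agile a p q := by
  rw [agile, rpow_neg hq0.le, rpow_sub hq0, Mfun_sub_mul_Mfun (rpow_pos_of_pos hq0 p)
    (rpow_lt_one hq0.le hq1 hp) (rpow_pos_of_pos hq0 a).ne']
  ring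

/-- Application 2, equation (38): for `0 < q < 1`, `p > 0` and `0 < a < p`,
`M(-q^{-a}, q^p) - q^a M(-q^a, q^p) = f(-q^p) [a,p;q]`. -/
theorem Mfun_agile (a p q : ℝ)
    (hq0 : 0 < q) (hq1 : q < 1) (hp : 0 < p) (ha0 : 0 < a) (hap : a < p) :
    Mfun (-q ^ (-a)) (q ^ p) - q ^ a * Mfun (-q ^ a) (q ^ p) =
      qPoch (q ^ p) (q ^ p) * agile a p q :=
  Mfun_agile_general a p q hq0 hq1 hp
end

section
/- Let 0 < q < 1, A > 0, let B₁ be real, let m ∈ ℤ and ε ∈ {1,-1}, and set B₂ = ε·B₁ + 2mA. Then q^{B₁²/(4A)} · ∑_{n=-∞}^∞ q^{A n² + B₁ n} = q^{B₂²/(4A)} · ∑_{n=-∞}^∞ q^{A n² + B₂ n}. (This is the key identity in the proof of Theorem 5 on the invariance of τ*.) -/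
open Real

/-- The key theta-series identity (50) used in the proof of Theorem 5: for
`0 < q < 1`, `A > 0`, real `B₁`, `m ∈ ℤ` and `ε ∈ {1,-1}`, with
`B₂ = εB₁ + 2mA`,
`q^{B₁²/(4A)} ∑_{n=-∞}^∞ q^{An² + B₁n} = q^{B₂²/(4A)} ∑_{n=-∞}^∞ q^{An² + B₂n}`. -/
theorem theta_shift_invariance (q A B₁ B₂ ε : ℝ) (m : ℤ)
    (hq0 : 0 < q) (hq1 : q < 1) (hA : 0 < A)
    (hε : ε = 1 ∨ ε = -1) (hB₂ : B₂ = ε * B₁ + 2 * (m : ℝ) * A) :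
    q ^ (B₁ ^ 2 / (4 * A)) * ∑' n : ℤ, q ^ (A * (n : ℝ) ^ 2 + B₁ * (n : ℝ)) =
      q ^ (B₂ ^ 2 / (4 * A)) *
        ∑' n : ℤ, q ^ (A * (n : ℝ) ^ 2 + B₂ * (n : ℝ)) := by
  have hA' : (A : ℝ) ≠ 0 := hA.ne'
  rw [← tsum_mul_left, ← tsum_mul_left]
  simp_rw [← Real.rpow_add hq0]
  rcases hε with h | h
  · subst h
    rw [← (Equiv.subRight m).tsum_eq
      (fun n : ℤ => q ^ (B₂ ^ 2 / (4 * A) + (A * (n : ℝ) ^ 2 + B₂ * (n : ℝ))))]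
    refine tsum_congr fun n => ?_
    congr 1
    simp only [Equiv.subRight_apply]
    push_cast
    subst hB₂
    field_simp
    ring
  · subst h
    rw [← ((Equiv.addRight m).trans (Equiv.neg ℤ)).tsum_eq
      (fun n : ℤ => q ^ (B₂ ^ 2 / (4 * A) + (A * (n : ℝ) ^ 2 + B₂ * (n : ℝ))))]
    refine tsum_congr fun n => ?_
    congr 1
    simp only [Equiv.trans_apply, Equiv.coe_addRight, Equiv.neg_apply]
    push_cast
    subst hB₂
    field_simp
    ring
end
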